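/- Let N = 2^n with n ≥ 1, G unitary with det G = 1, S = σ_{nz}, X = S G† S G. Then the multiplicity of the eigenvalue 1 of X is even and the multiplicity of the eigenvalue −1 of X is even. -/

import Mathlib

/-!
The eigenvalues of the unitary `X` lie on the unit circle, and `σ_{nz} X σ_{nz} = Xᴴ` makes the
multiset of eigenvalues closed under conjugation, so the non-real ones pair off as `μ, μ̄`. The
pairs contribute an even number to the dimension and the positive factor `∏ |μ|²` to
`det X = (det σ_{nz})² |det G|² = 1`; the real eigenvalues are `±1`, so `(-1)^(mult of -1)` is
positive, and then the multiplicity of `1` is even because the dimension `2^n` is.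
-/

open Matrix

/-- `σ_{nz} = I^{⊗(n-1)} ⊗ σ_z` on `n` qubits (qubit `n` = least significant bit). -/
noncomputable def sigmaNZ (n : ℕ) : Matrix (Fin (2 ^ n)) (Fin (2 ^ n)) ℂ :=
  Matrix.diagonal fun i => if i.val % 2 = 0 then 1 else -1

open Polynomial ComplexConjugate

namespace Multiset

theorem eq_replicate_add_replicate_of_forall_eq_or_eq {α : Type*} [DecidableEq α]
    {s : Multiset α} {a b : α} (hab : a ≠ b) (h : ∀ x ∈ s, x = a ∨ x = b) :
    s = replicate (count a s) a + replicate (count b s) b := by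
  conv_lhs => rw [← filter_add_not (p := (· = a)) s]
  rw [filter_eq']
  congr 1
  rw [← filter_eq']
  refine filter_congr fun x hx => ?_
  rcases h x hx with rfl | rfl <;> simp [hab, hab.symm]

variable {s : Multiset ℂ}

theorem filter_im_neg_eq_map_conj (hs : s.map conj = s) :
    s.filter (fun z => z.im < 0) = (s.filter (fun z => 0 < z.im)).map conj := by
  conv_lhs => rw [← hs]
  rw [filter_map]
  congr 1
  refine filter_congr fun z _ => ?_
  simp

theorem filter_im_ne_zero_eq_add_map_conj (hs : s.map conj = s) :
    s.filter (fun z => z.im ≠ 0) =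
      s.filter (fun z => 0 < z.im) + (s.filter (fun z => 0 < z.im)).map conj := by
  have hdisj : s.filter (fun z => 0 < z.im ∧ z.im < 0) = 0 :=
    filter_eq_nil.2 fun z _ h => lt_asymm h.1 h.2
  rw [← filter_im_neg_eq_map_conj hs, filter_add_filter, hdisj, add_zero]
  exact filter_congr fun z _ => ne_iff_lt_or_gt.trans or_comm

theorem eq_one_or_eq_neg_one_of_norm_eq_one_of_im_eq_zero {z : ℂ} (hz : ‖z‖ = 1)
    (him : z.im = 0) : z = 1 ∨ z = -1 := by
  have hre : z.re * z.re = 1 := by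
    simpa [Complex.norm_def, Complex.normSq_apply, him] using hz
  rcases mul_self_eq_one_iff.1 hre with h | h
  · exact .inl (Complex.ext h him)
  · exact .inr (Complex.ext h (by simpa using him))

theorem even_count_one_and_neg_one_of_map_conj_eq (hs : s.map conj = s)
    (hnorm : ∀ z ∈ s, ‖z‖ = 1) (hprod : s.prod = 1) (hcard : Even (card s)) :
    Even (s.count 1) ∧ Even (s.count (-1)) := by
  set Z := s.filter (fun z => z.im = 0)
  set P := s.filter (fun z => 0 < z.im)
  have hsplit : Z + (P + P.map conj) = s := by
    rw [← filter_im_ne_zero_eq_add_map_conj hs, filter_add_not]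
  have hZ : Z = replicate (s.count 1) 1 + replicate (s.count (-1)) (-1) := by
    have hcount (a : ℂ) (ha : a.im = 0) : s.count a = Z.count a :=
      (count_filter_of_pos (p := fun z : ℂ => z.im = 0) ha).symm
    rw [hcount 1 rfl, hcount (-1) (by simp)]
    refine eq_replicate_add_replicate_of_forall_eq_or_eq (by norm_num) fun z hz => ?_
    rw [mem_filter] at hz
    exact eq_one_or_eq_neg_one_of_norm_eq_one_of_im_eq_zero (hnorm z hz.1) hz.2
  have hprod' : (-1 : ℂ) ^ s.count (-1) * (Complex.normSq P.prod : ℂ) = 1 :=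
    calc _ = Z.prod * (P + P.map conj).prod := by
          rw [hZ, ← Complex.mul_conj, map_multiset_prod]
          simp only [prod_add, prod_replicate, one_pow, one_mul]
      _ = 1 := by rw [← prod_add, hsplit, hprod]
  have hcard' : card s = s.count 1 + s.count (-1) + 2 * card P :=
    calc _ = card Z + card (P + P.map conj) := by rw [← card_add, hsplit]
      _ = _ := by rw [hZ]; simp only [card_add, card_replicate, card_map]; ring
  have hneg : Even (s.count (-1)) := by
    by_contra hodd
    rw [Nat.not_even_iff_odd] at hodd
    rw [hodd.neg_one_pow] at hprod'
    have hnormSq : ((Complex.normSq P.prod : ℝ) : ℂ) = ((-1 : ℝ) : ℂ) := by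
      push_cast; linear_combination -hprod'
    linarith [Complex.ofReal_injective hnormSq, Complex.normSq_nonneg P.prod]
  refine ⟨?_, hneg⟩
  rw [hcard'] at hcard
  simpa [parity_simps, hneg] using hcard

end Multiset

namespace Matrix

variable {m : Type*} [Fintype m] [DecidableEq m]

theorem charpoly_mul_mul_of_mul_self_eq_one {R : Type*} [CommRing R] {S : Matrix m m R}
    (hS : S * S = 1) (A : Matrix m m R) : (S * A * S).charpoly = A.charpoly := by
  rw [charpoly_mul_comm, ← Matrix.mul_assoc, hS, Matrix.one_mul]

theorem charpoly_conjTranspose {R : Type*} [CommRing R] [StarRing R] (A : Matrix m m R) :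
    Aᴴ.charpoly = A.charpoly.map (starRingEnd R) := by
  rw [conjTranspose, transpose_map, charpoly_transpose]
  exact charpoly_map A (starRingEnd R)

theorem roots_charpoly_conjTranspose (A : Matrix m m ℂ) :
    Aᴴ.charpoly.roots = A.charpoly.roots.map conj := by
  rw [charpoly_conjTranspose, (IsAlgClosed.splits _).roots_map]

open scoped Matrix.Norms.L2Operator in
theorem norm_eq_one_of_mem_roots_charpoly {A : Matrix m m ℂ} (hA : A ∈ unitary (Matrix m m ℂ))
    {z : ℂ} (hz : z ∈ A.charpoly.roots) : ‖z‖ = 1 :=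
  spectrum.norm_eq_one_of_unitary hA (mem_spectrum_iff_isRoot_charpoly.2 (isRoot_of_mem_roots hz))

theorem even_count_roots_charpoly_one_and_neg_one {A : Matrix m m ℂ}
    (hA : A ∈ unitary (Matrix m m ℂ)) (hdet : A.det = 1) (hconj : Aᴴ.charpoly = A.charpoly)
    (hm : Even (Fintype.card m)) :
    Even (A.charpoly.roots.count 1) ∧ Even (A.charpoly.roots.count (-1)) := by
  refine Multiset.even_count_one_and_neg_one_of_map_conj_eq ?_
    (fun z hz => norm_eq_one_of_mem_roots_charpoly hA hz) ?_ ?_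
  · rw [← roots_charpoly_conjTranspose, hconj]
  · rw [← det_eq_prod_roots_charpoly, hdet]
  · rwa [← (IsAlgClosed.splits _).natDegree_eq_card_roots, charpoly_natDegree_eq_dim]

variable {S G : Matrix m m ℂ}

theorem conjTranspose_mul_conjTranspose_mul_mul (hSH : Sᴴ = S) (hS : S * S = 1) :
    (S * Gᴴ * S * G)ᴴ = S * (S * Gᴴ * S * G) * S := by
  simp only [conjTranspose_mul, conjTranspose_conjTranspose, hSH, ← Matrix.mul_assoc, hS,
    Matrix.one_mul]

theorem det_mul_conjTranspose_mul_mul (hS : S * S = 1) (hG : Gᴴ * G = 1) :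
    (S * Gᴴ * S * G).det = 1 :=
  calc _ = (S * S).det * (Gᴴ * G).det := by simp only [det_mul]; ring
    _ = 1 := by rw [hS, hG, det_one, mul_one]

theorem even_count_roots_charpoly_mul_conjTranspose_mul_mul (hSH : Sᴴ = S) (hS : S * S = 1)
    (hG : G ∈ unitary (Matrix m m ℂ)) (hm : Even (Fintype.card m)) :
    Even ((S * Gᴴ * S * G).charpoly.roots.count 1) ∧
      Even ((S * Gᴴ * S * G).charpoly.roots.count (-1)) := by
  have hSu : S ∈ unitary (Matrix m m ℂ) :=
    mem_unitaryGroup_iff.2 (by rw [star_eq_conjTranspose, hSH, hS])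
  refine even_count_roots_charpoly_one_and_neg_one ?_ ?_ ?_ hm
  · exact mul_mem (mul_mem (mul_mem hSu (Unitary.star_mem hG)) hSu) hG
  · exact det_mul_conjTranspose_mul_mul hS (Unitary.star_mul_self_of_mem hG)
  · rw [conjTranspose_mul_conjTranspose_mul_mul hSH hS, charpoly_mul_mul_of_mul_self_eq_one hS]

end Matrix

theorem sigmaNZ_mul_self (n : ℕ) : sigmaNZ n * sigmaNZ n = 1 := by
  rw [sigmaNZ, diagonal_mul_diagonal, ← diagonal_one]
  congr 1 with i
  split_ifs <;> norm_num

theorem conjTranspose_sigmaNZ (n : ℕ) : (sigmaNZ n)ᴴ = sigmaNZ n := by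
  rw [sigmaNZ, diagonal_conjTranspose]
  congr 1 with i
  split_ifs <;> simp [*]

theorem stmt_19_general (n : ℕ) (hn : 1 ≤ n) (G : Matrix (Fin (2 ^ n)) (Fin (2 ^ n)) ℂ)
    (hGu : G * Gᴴ = 1) :
    Even ((sigmaNZ n * Gᴴ * sigmaNZ n * G).charpoly.roots.count 1) ∧
    Even ((sigmaNZ n * Gᴴ * sigmaNZ n * G).charpoly.roots.count (-1)) :=
  even_count_roots_charpoly_mul_conjTranspose_mul_mul (conjTranspose_sigmaNZ n)
    (sigmaNZ_mul_self n) (mem_unitaryGroup_iff.2 hGu)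
    (by simpa using Nat.even_pow.2 ⟨even_two, by omega⟩)

/-- For `G ∈ SU(2^n)` (`n ≥ 1`) and `X = σ_{nz} Gᴴ σ_{nz} G`, the multiplicity
of the eigenvalue `1` of `X` is even, and the multiplicity of `-1` is even. -/
theorem stmt_19 (n : ℕ) (hn : 1 ≤ n) (G : Matrix (Fin (2 ^ n)) (Fin (2 ^ n)) ℂ)
    (hGu : G * Gᴴ = 1) (hGu' : Gᴴ * G = 1) (hGdet : G.det = 1) :
    Even ((sigmaNZ n * Gᴴ * sigmaNZ n * G).charpoly.roots.count 1) ∧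
    Even ((sigmaNZ n * Gᴴ * sigmaNZ n * G).charpoly.roots.count (-1)) :=
  stmt_19_general n hn G hGu
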